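/- arXiv:1410.5595 — 4 statements merged into one kernel-verified Lean document; each statement's English description precedes it below -/
import Mathlib

section
/- For every n ≥ 1, d ≥ 1, every pair of subsets A, B ⊆ [n], and every τ ≥ 0, P( |e_π(A,B) − μ| ≥ τ·μ ) ≤ 2·exp( −τ²·μ / (2 + τ) ), where π = (π1,…,πd) is a tuple of d independent uniformly random permutations of [n] and μ = (d/n)·|A|·|B|. -/
open scoped Classical

noncomputable section

/-- Number of directed edges from `A` to `B` in the permutation model, counting
multiplicity: `e_π(A,B) = Σ_k #{i ∈ A : π_k(i) ∈ B}`. -/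
def eperm {n d : ℕ} (π : Fin d → Equiv.Perm (Fin n)) (A B : Finset (Fin n)) : ℕ :=
  ∑ k : Fin d, (A.filter fun i => π k i ∈ B).card

/-- Probability of the event `E` for a uniformly random `d`-tuple of permutations of `[n]`. -/
def PrPerm (n d : ℕ) (E : (Fin d → Equiv.Perm (Fin n)) → Prop) : ℝ :=
  ((Finset.univ.filter fun π : Fin d → Equiv.Perm (Fin n) => E π).card : ℝ) /
    (Fintype.card (Fin d → Equiv.Perm (Fin n)) : ℝ)

/-!
For one uniform permutation `σ` of an `n`-set, `X = #{i ∈ A | σ i ∈ B}` is hypergeometric and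
`E[r ^ X] ≤ exp ((r - 1) |A| |B| / n)` for every `r ≥ 0`, as for a Poisson variable: conditioning
on the image `j` of one point of `A` leaves a uniform permutation of `n - 1` points, and the
resulting recursion closes by `1 + t ≤ exp t`. The `d` permutations are independent, so
`E[r ^ e_π(A,B)] ≤ exp ((r - 1) μ)`. Markov's inequality with `r = 1 ± τ` then bounds each tail by
`exp (±τ μ - (1 ± τ) μ log (1 ± τ))`, and `log (1 + τ) ≥ 2τ / (2 + τ)` and
`(1 - τ) log (1 - τ) ≥ τ² / 2 - τ` turn both exponents into `-τ² μ / (2 + τ)`.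
-/

open Finset Equiv Fintype
open scoped Nat

section

open Real

/-- The first term of the series `log ((1 + y) / (1 - y)) = 2 (y + y³/3 + ⋯)` at
`y = x / (2 + x)`, for which `(1 + y) / (1 - y) = 1 + x`. -/
lemma two_mul_div_two_add_le_log_one_add {x : ℝ} (hx : 0 ≤ x) :
    2 * x / (2 + x) ≤ log (1 + x) := by
  have h2x : 0 < 2 + x := by linarith
  have hy : |x / (2 + x)| < 1 := by
    rw [abs_of_nonneg (by positivity), div_lt_one h2x]
    linarith
  have hlog : log (1 + x / (2 + x)) - log (1 - x / (2 + x)) = log (1 + x) := by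
    have hy1 : x / (2 + x) < 1 := (abs_lt.1 hy).2
    rw [← log_div (by positivity) (by linarith)]
    congr 1
    field_simp
    ring
  have h := le_hasSum (hasSum_log_sub_log_of_abs_lt_one hy) 0 fun k _ => by positivity
  norm_num [hlog] at h
  rwa [mul_div_assoc]

lemma sq_div_two_add_le_mul_log_one_add_sub {τ : ℝ} (hτ : 0 ≤ τ) :
    τ ^ 2 / (2 + τ) ≤ (1 + τ) * log (1 + τ) - τ := by
  have h := mul_le_mul_of_nonneg_left (two_mul_div_two_add_le_log_one_add hτ)
    (by linarith : (0 : ℝ) ≤ 1 + τ)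
  have e : τ ^ 2 / (2 + τ) = (1 + τ) * (2 * τ / (2 + τ)) - τ := by
    field_simp
    ring
  linarith

lemma sub_inv_div_two_le_log {z : ℝ} (hz : 0 < z) (hz1 : z ≤ 1) : (z - z⁻¹) / 2 ≤ log z := by
  have h := self_le_sinh_iff.2 (neg_nonneg.2 (log_nonpos hz.le hz1))
  rw [sinh_eq, neg_neg, exp_log hz, exp_neg, exp_log hz] at h
  linarith

lemma sq_div_two_add_le_add_mul_log_one_sub {τ : ℝ} (hτ : 0 ≤ τ) (hτ1 : τ < 1) :
    τ ^ 2 / (2 + τ) ≤ τ + (1 - τ) * log (1 - τ) := by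
  have hz : 0 < 1 - τ := by linarith
  have h := mul_le_mul_of_nonneg_left (sub_inv_div_two_le_log hz (by linarith)) hz.le
  have e : (1 - τ) * ((1 - τ - (1 - τ)⁻¹) / 2) = τ ^ 2 / 2 - τ := by
    field_simp
    ring
  have h2 : τ ^ 2 / (2 + τ) ≤ τ ^ 2 / 2 :=
    div_le_div_of_nonneg_left (sq_nonneg τ) two_pos (by linarith)
  linarith

lemma mul_mul_exp_neg_add_one_sub_le_exp {p r x y : ℝ} (hp : 0 ≤ p) (hr : r = 1 + x + y)
    (hxy : 0 ≤ x * y) (hy : -1 ≤ y) : p * (r * exp (-x)) + (1 - p) ≤ exp (p * y) := by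
  have hr' : r ≤ (1 + y) * exp x := calc
    r ≤ (1 + y) * (1 + x) := by nlinarith
    _ ≤ (1 + y) * exp x := by
      gcongr
      · linarith
      · linarith [add_one_le_exp x]
  have h : r * exp (-x) ≤ 1 + y := by
    rw [exp_neg, ← div_eq_mul_inv, div_le_iff₀ (exp_pos x)]
    exact hr'
  nlinarith [add_one_le_exp (p * y), mul_le_mul_of_nonneg_left h hp]

/-- The induction step of `sum_perm_pow_card_filter_le`: a new point of `A` is sent into `B`
with probability `b / (n + 1)`, contributing a factor `r` and leaving `b - 1` targets, and
otherwise leaves all `b` targets. -/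
lemma mul_mul_exp_add_mul_exp_le {a b n r : ℝ} (ha : 0 ≤ a) (han : a ≤ n) (hb : 0 ≤ b)
    (hbn : b ≤ n + 1) (hr : 0 ≤ r) :
    b * (r * exp ((r - 1) * a * (b - 1) / n)) + (n + 1 - b) * exp ((r - 1) * a * b / n) ≤
      (n + 1) * exp ((r - 1) * (a + 1) * b / (n + 1)) := by
  rcases (ha.trans han).eq_or_lt with rfl | hn
  · obtain rfl : a = 0 := le_antisymm han ha
    simpa [mul_comm b] using
      mul_mul_exp_neg_add_one_sub_le_exp (x := 0) (y := r - 1) hb (by ring) (by simp) (by linarith)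
  have hna : 0 ≤ n - a := by linarith
  -- split `r - 1` as `x + y` with `x = (r - 1) a / n`, `y = (r - 1) (n - a) / n`
  have hcore : b / (n + 1) * (r * exp (-((r - 1) * a / n))) + (1 - b / (n + 1)) ≤
      exp (b / (n + 1) * ((r - 1) * (n - a) / n)) := by
    refine mul_mul_exp_neg_add_one_sub_le_exp (by positivity) ?_ ?_ ?_
    · field_simp
      ring
    · have e : (r - 1) * a / n * ((r - 1) * (n - a) / n) = (r - 1) ^ 2 * (a * (n - a)) / n ^ 2 := by
        ring
      rw [e]
      positivity
    · have e : (r - 1) * (n - a) / n = (r * (n - a) + a) / n - 1 := by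
        field_simp
        ring
      have : 0 ≤ (r * (n - a) + a) / n := by positivity
      linarith
  have e1 : exp ((r - 1) * a * (b - 1) / n) =
      exp ((r - 1) * a * b / n) * exp (-((r - 1) * a / n)) := by
    rw [← exp_add]
    congr 1
    ring
  have e2 : exp ((r - 1) * (a + 1) * b / (n + 1)) =
      exp ((r - 1) * a * b / n) * exp (b / (n + 1) * ((r - 1) * (n - a) / n)) := by
    rw [← exp_add]
    congr 1
    field_simp
    ring
  rw [e1, e2]
  calc _ = (n + 1) * exp ((r - 1) * a * b / n) *
        (b / (n + 1) * (r * exp (-((r - 1) * a / n))) + (1 - b / (n + 1))) := by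
        field_simp
    _ ≤ _ := by
      rw [mul_assoc _ (exp _)]
      gcongr

section Chernoff

variable {Ω : Type*} [Fintype Ω] (X : Ω → ℕ) {μ : ℝ}

lemma card_filter_mul_le_sum_pow {r θ : ℝ} (hr : 0 ≤ r) (p : Ω → Prop) [DecidablePred p]
    (h : ∀ ω, p ω → θ ≤ r ^ X ω) : (#{ω | p ω} : ℝ) * θ ≤ ∑ ω, r ^ X ω := by
  calc (#{ω | p ω} : ℝ) * θ = ∑ ω ∈ {ω | p ω}, θ := by rw [sum_const, nsmul_eq_mul]
    _ ≤ ∑ ω ∈ {ω | p ω}, r ^ X ω := sum_le_sum fun ω hω => h ω (mem_filter.1 hω).2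
    _ ≤ ∑ ω, r ^ X ω :=
      sum_le_sum_of_subset_of_nonneg (subset_univ _) fun _ _ _ => by positivity

lemma card_filter_le_of_mul_log_le
    (hX : ∀ r : ℝ, 0 ≤ r → ∑ ω, r ^ X ω ≤ card Ω * exp ((r - 1) * μ))
    {r t : ℝ} (hr : 0 < r) (p : Ω → Prop) [DecidablePred p]
    (hp : ∀ ω, p ω → t * log r ≤ X ω * log r) :
    (#{ω | p ω} : ℝ) ≤ card Ω * exp ((r - 1) * μ - t * log r) := by
  have h := (card_filter_mul_le_sum_pow X (θ := exp (t * log r)) hr.le p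
    fun ω hω => ?_).trans (hX r hr.le)
  · rwa [exp_sub, ← mul_div_assoc, le_div_iff₀ (exp_pos _)]
  · calc exp (t * log r) ≤ exp (X ω * log r) := exp_le_exp.2 (hp ω hω)
      _ = r ^ X ω := by rw [exp_nat_mul, exp_log hr]

lemma card_upper_tail_le (hX : ∀ r : ℝ, 0 ≤ r → ∑ ω, r ^ X ω ≤ card Ω * exp ((r - 1) * μ))
    (hμ : 0 ≤ μ) {τ : ℝ} (hτ : 0 ≤ τ) :
    (#{ω | (1 + τ) * μ ≤ X ω} : ℝ) ≤ card Ω * exp (-(τ ^ 2 * μ) / (2 + τ)) := by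
  have hlog : 0 ≤ log (1 + τ) := log_nonneg (by linarith)
  refine (card_filter_le_of_mul_log_le X hX (r := 1 + τ) (by linarith) _
    fun ω hω => mul_le_mul_of_nonneg_right hω hlog).trans ?_
  gcongr
  have := mul_le_mul_of_nonneg_right (sq_div_two_add_le_mul_log_one_add_sub hτ) hμ
  have e : -(τ ^ 2 * μ) / (2 + τ) = -(τ ^ 2 / (2 + τ) * μ) := by ring
  rw [e]
  linarith

lemma card_lower_tail_le (hX : ∀ r : ℝ, 0 ≤ r → ∑ ω, r ^ X ω ≤ card Ω * exp ((r - 1) * μ))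
    (hμ : 0 ≤ μ) {τ : ℝ} (hτ : 0 ≤ τ) :
    (#{ω | X ω ≤ (1 - τ) * μ} : ℝ) ≤ card Ω * exp (-(τ ^ 2 * μ) / (2 + τ)) := by
  rcases lt_trichotomy τ 1 with hτ1 | rfl | hτ1
  · have hlog : log (1 - τ) ≤ 0 := log_nonpos (by linarith) (by linarith)
    refine (card_filter_le_of_mul_log_le X hX (r := 1 - τ) (by linarith) _
      fun ω hω => mul_le_mul_of_nonpos_right hω hlog).trans ?_
    gcongr
    have := mul_le_mul_of_nonneg_right (sq_div_two_add_le_add_mul_log_one_sub hτ hτ1) hμ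
    have e : -(τ ^ 2 * μ) / (2 + τ) = -(τ ^ 2 / (2 + τ) * μ) := by ring
    rw [e]
    linarith
  · -- `r = 1 - τ = 0` has no logarithm, but the event is `X = 0`, where `0 ^ X = 1`
    have h := (card_filter_mul_le_sum_pow X le_rfl (θ := 1) (fun ω => X ω ≤ (1 - 1) * μ)
      fun ω hω => ?_).trans (hX 0 le_rfl)
    · rw [mul_one] at h
      refine h.trans ?_
      gcongr
      linarith
    · have : X ω = 0 := by exact_mod_cast (by linarith : (X ω : ℝ) ≤ 0).antisymm (Nat.cast_nonneg _)
      simp [this]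
  · rcases hμ.eq_or_lt with rfl | hμ
    · simpa using card_le_univ _
    · have : #{ω | X ω ≤ (1 - τ) * μ} = 0 := by
        rw [Finset.card_eq_zero, filter_eq_empty_iff]
        intro ω _ h
        nlinarith [(Nat.cast_nonneg (X ω) : (0 : ℝ) ≤ X ω)]
      rw [this, Nat.cast_zero]
      positivity

end Chernoff

lemma card_filter_insertNone {α : Type*} (A : Finset α) (p : Option α → Prop) [DecidablePred p] :
    #{i ∈ insertNone A | p i} = (if p none then 1 else 0) + #{x ∈ A | p (some x)} := by
  simp only [card_filter, sum_insertNone]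

lemma card_eraseNone_map_swap {α : Type*} [DecidableEq α] (B : Finset (Option α)) (j : Option α) :
    #(B.map (swap none j).toEmbedding).eraseNone = #B - if j ∈ B then 1 else 0 := by
  have hnone : none ∈ B.map (swap none j).toEmbedding ↔ j ∈ B := by simp [mem_map_equiv]
  split_ifs with hj
  · rw [card_eraseNone_of_mem (hnone.2 hj), card_map]
  · rw [card_eraseNone_of_not_mem (mt hnone.1 hj), card_map, Nat.sub_zero]

lemma sum_ite_mem_univ {ι M : Type*} [Fintype ι] [DecidableEq ι] [Ring M] (B : Finset ι)
    (x y : M) : ∑ j, (if j ∈ B then x else y) = #B * x + (card ι - #B) * y := by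
  rw [sum_ite, sum_const, sum_const, filter_not, filter_mem_eq_inter, univ_inter,
    card_univ_sdiff, nsmul_eq_mul, nsmul_eq_mul, Nat.cast_sub (card_le_univ B)]

section Perm

variable {α β : Type*} [Fintype α] [DecidableEq α]

lemma sum_perm_pow_card_filter_map [Fintype β] [DecidableEq β] (e : α ≃ β) (A B : Finset α)
    (r : ℝ) : ∑ σ : Perm α, r ^ #{i ∈ A | σ i ∈ B} =
      ∑ σ : Perm β, r ^ #{i ∈ A.map e.toEmbedding | σ i ∈ B.map e.toEmbedding} := by
  rw [← e.permCongr.sum_comp]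
  refine sum_congr rfl fun σ _ => ?_
  rw [filter_map, card_map]
  congr 3
  ext i
  simp [permCongr_apply]

lemma sum_perm_option_eq (A : Finset α) (B : Finset (Option α)) (r : ℝ) :
    ∑ σ : Perm (Option α), r ^ #{i ∈ insertNone A | σ i ∈ B} =
      ∑ j : Option α, (if j ∈ B then r else 1) *
        ∑ e : Perm α, r ^ #{x ∈ A | e x ∈ (B.map (swap none j).toEmbedding).eraseNone} := by
  -- `decomposeOption.symm (j, e)` sends `none ↦ j` and `some x ↦ swap none j (some (e x))`
  rw [← Perm.decomposeOption.symm.sum_comp, Fintype.sum_prod_type]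
  refine sum_congr rfl fun j _ => ?_
  rw [mul_sum]
  refine sum_congr rfl fun e _ => ?_
  rw [card_filter_insertNone, pow_add]
  simp [Perm.decomposeOption_symm_apply, mem_map_equiv]

lemma sum_perm_option_le (A : Finset α) (B : Finset (Option α)) {r : ℝ} (hr : 0 ≤ r)
    (ih : ∀ C : Finset α, ∑ e : Perm α, r ^ #{x ∈ A | e x ∈ C} ≤
      (card α)! * exp ((r - 1) * #A * #C / card α)) :
    ∑ σ : Perm (Option α), r ^ #{i ∈ insertNone A | σ i ∈ B} ≤
      (card α + 1)! * exp ((r - 1) * (#A + 1) * #B / (card α + 1)) := by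
  have hterm (j : Option α) : (if j ∈ B then r else 1) *
      ((card α)! * exp ((r - 1) * #A * #(B.map (swap none j).toEmbedding).eraseNone / card α)) =
      (card α)! * if j ∈ B then r * exp ((r - 1) * #A * (#B - 1) / card α)
        else exp ((r - 1) * #A * #B / card α) := by
    rw [card_eraseNone_map_swap]
    split_ifs with hj
    · rw [Nat.cast_sub (card_pos.2 ⟨j, hj⟩), Nat.cast_one]
      ring
    · rw [Nat.sub_zero, one_mul]
  have hA : (#A : ℝ) ≤ card α := by exact_mod_cast card_le_univ A
  have hB : (#B : ℝ) ≤ card α + 1 := by exact_mod_cast (card_le_univ B).trans_eq card_option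
  rw [sum_perm_option_eq]
  calc _ ≤ ∑ j : Option α, (if j ∈ B then r else 1) *
        ((card α)! * exp ((r - 1) * #A * #(B.map (swap none j).toEmbedding).eraseNone / card α)) :=
        sum_le_sum fun j _ => mul_le_mul_of_nonneg_left (ih _) (by split_ifs <;> positivity)
    _ = (card α)! * (#B * (r * exp ((r - 1) * #A * (#B - 1) / card α)) +
        (card α + 1 - #B) * exp ((r - 1) * #A * #B / card α)) := by
        rw [sum_congr rfl fun j _ => hterm j, ← mul_sum, sum_ite_mem_univ, card_option,
          Nat.cast_add_one]
    _ ≤ (card α)! * ((card α + 1) * exp ((r - 1) * (#A + 1) * #B / (card α + 1))) := by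
        gcongr
        exact mul_mul_exp_add_mul_exp_le (by positivity) hA (by positivity) hB hr
    _ = _ := by
        push_cast [Nat.factorial_succ]
        ring

theorem sum_perm_pow_card_filter_le (A B : Finset α) {r : ℝ} (hr : 0 ≤ r) :
    ∑ σ : Perm α, r ^ #{i ∈ A | σ i ∈ B} ≤ (card α)! * exp ((r - 1) * #A * #B / card α) := by
  obtain ⟨n, hn⟩ : ∃ n, card α = n := ⟨_, rfl⟩
  induction n generalizing α with
  | zero =>
    have := card_eq_zero_iff.1 hn
    simp [eq_empty_of_isEmpty A]
  | succ n ih =>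
    rcases A.eq_empty_or_nonempty with rfl | ⟨i₀, hi₀⟩
    · simp [card_perm]
    -- relabel `α` as `Option {x // x ≠ i₀}` with `i₀ ↦ none`
    let e := (optionSubtypeNe i₀).symm
    have hcard : card {x // x ≠ i₀} = n := by
      rw [card_subtype_compl, card_subtype_eq, hn, Nat.add_sub_cancel]
    have hnone : none ∈ A.map e.toEmbedding := by simpa [mem_map_equiv, e]
    have hA : A.map e.toEmbedding = insertNone (A.map e.toEmbedding).eraseNone := by
      rw [insertNone_eraseNone, insert_eq_of_mem hnone]
    have hA' : (#(A.map e.toEmbedding).eraseNone : ℝ) + 1 = #A := by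
      rw [card_eraseNone_of_mem hnone, card_map,
        Nat.cast_sub (card_pos.2 ⟨i₀, hi₀⟩), Nat.cast_one, sub_add_cancel]
    rw [sum_perm_pow_card_filter_map e, hA]
    refine (sum_perm_option_le _ _ hr fun C => ih _ C hcard).trans_eq ?_
    rw [hcard, hn, card_map, hA', Nat.cast_add_one]

end Perm

end

lemma sum_pow_eperm_eq {n d : ℕ} (A B : Finset (Fin n)) (r : ℝ) :
    ∑ π : Fin d → Perm (Fin n), r ^ eperm π A B =
      (∑ σ : Perm (Fin n), r ^ #{i ∈ A | σ i ∈ B}) ^ d := by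
  rw [Fintype.sum_pow]
  simp only [eperm, prod_pow_eq_pow_sum]

lemma sum_pow_eperm_le {n d : ℕ} (A B : Finset (Fin n)) {r : ℝ} (hr : 0 ≤ r) :
    ∑ π : Fin d → Perm (Fin n), r ^ eperm π A B ≤
      card (Fin d → Perm (Fin n)) * Real.exp ((r - 1) * ((d : ℝ) / n * #A * #B)) := by
  rw [sum_pow_eperm_eq]
  calc _ ≤ ((n ! : ℝ) * Real.exp ((r - 1) * #A * #B / n)) ^ d := by
        refine pow_le_pow_left₀ (Finset.sum_nonneg fun σ _ => by positivity) ?_ d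
        simpa using sum_perm_pow_card_filter_le A B hr
    _ = _ := by
        rw [mul_pow, ← Real.exp_nat_mul, card_fun, card_perm, Fintype.card_fin, Fintype.card_fin]
        push_cast
        ring_nf

theorem stmt_6 :
    ∀ n d : ℕ, 1 ≤ n → 1 ≤ d → ∀ A B : Finset (Fin n), ∀ τ : ℝ, 0 ≤ τ →
      PrPerm n d (fun π =>
          τ * (((d : ℝ) / n) * A.card * B.card) ≤
            |(eperm π A B : ℝ) - ((d : ℝ) / n) * A.card * B.card|) ≤
        2 * Real.exp (-(τ ^ 2 * (((d : ℝ) / n) * A.card * B.card)) / (2 + τ)) := by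
  intro n d _ _ A B τ hτ
  set μ : ℝ := (d : ℝ) / n * #A * #B
  have hμ : 0 ≤ μ := by positivity
  have hX (r : ℝ) (hr : 0 ≤ r) := sum_pow_eperm_le (d := d) A B hr
  have hsplit : univ.filter (fun π : Fin d → Perm (Fin n) => τ * μ ≤ |(eperm π A B : ℝ) - μ|) ⊆
      univ.filter (fun π => (1 + τ) * μ ≤ eperm π A B) ∪
        univ.filter (fun π => eperm π A B ≤ (1 - τ) * μ) := by
    intro π
    simp only [mem_filter, mem_union, mem_univ, true_and, le_abs']
    rintro (h | h)
    · right
      linarith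
    · left
      linarith
  rw [PrPerm, div_le_iff₀ (by positivity)]
  calc _ ≤ (#{π | (1 + τ) * μ ≤ eperm π A B} : ℝ) + #{π | eperm π A B ≤ (1 - τ) * μ} := by
        exact_mod_cast (card_le_card hsplit).trans (card_union_le _ _)
    _ ≤ _ := add_le_add (card_upper_tail_le _ hX hμ hτ) (card_lower_tail_le _ hX hμ hτ)
    _ = _ := by ring
end
end

section
/- For every n ≥ 1, d ≥ 1, every pair of subsets A, B ⊆ [n], and every τ ≥ 0, the following two tail bounds hold: P( e_π(A,B) ≥ (1+τ)·(d/n)·|A|·|B| ) ≤ exp( −(τ²/(2+τ))·(d/n)·|A|·|B| ), and P( e_π(A,B) ≤ (1−τ)·(d/n)·|A|·|B| ) ≤ exp( −(τ²/2)·(d/n)·|A|·|B| ), where π = (π1,…,πd) is a tuple of d independent uniformly random permutations of [n]. -/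
open scoped Classical

noncomputable section

/-!
Chernoff's method. For one uniform permutation `σ` put `X σ = #{i ∈ A | σ i ∈ B}` and
`p = |B| / n`. The events `σ i ∈ B` are negatively correlated: transposing values shows that at
most a fraction `p ^ |t|` of all permutations map a set `t` into `B`. Expanding
`exp (θ X) = ∏_{i ∈ A} (1 + (e^θ - 1) [σ i ∈ B])` over the subsets of `A` therefore gives
`E exp (θ X) ≤ (1 + (e^θ - 1) p) ^ |A| ≤ exp ((e^θ - 1) p |A|)` for `θ ≥ 0`, and replacing `B` by
`Bᶜ` gives the same for `θ ≤ 0`. As `e_π(A,B)` is a sum of `d` independent copies of `X`, its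
moment generating function is at most that of a Poisson variable of mean `μ = d |A| |B| / n`.
Markov's inequality applied to `exp (θ e_π(A,B))` with `θ = log (1 + τ)`, and to
`exp (-τ e_π(A,B))`, then yields the two tails, via `log (1 + τ) ≥ 2τ / (2 + τ)` and
`e^(-τ) ≤ 1 - τ + τ² / 2`.
-/

open Finset Equiv

section RealInequalities

open Real

lemma exp_neg_le_one_sub_add_sq_div_two {x : ℝ} (hx : 0 ≤ x) : exp (-x) ≤ 1 - x + x ^ 2 / 2 := by
  have hmono : Monotone fun y => 1 - y + y ^ 2 / 2 - exp (-y) := by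
    refine monotone_of_hasDerivAt_nonneg (f' := fun y => -1 + y + exp (-y))
      (fun y => ?_) fun y => ?_
    · refine ((((hasDerivAt_id' y).const_sub 1).add ((hasDerivAt_pow 2 y).div_const 2)).sub
        (hasDerivAt_neg y).exp).congr_deriv ?_
      push_cast; ring
    · simp only [Pi.zero_apply]; linarith [add_one_le_exp (-y)]
  simpa using hmono hx

lemma sub_mul_log_one_add_le {τ : ℝ} (hτ : 0 ≤ τ) :
    τ - (1 + τ) * log (1 + τ) ≤ -(τ ^ 2 / (2 + τ)) := by
  have hsq : τ ^ 2 / (2 + τ) = (1 + τ) * (2 * τ / (τ + 2)) - τ := by field_simp; ring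
  nlinarith [mul_le_mul_of_nonneg_left (le_log_one_add_of_nonneg hτ) (by linarith : 0 ≤ 1 + τ)]

end RealInequalities

section SinglePermutation

open Real

variable {α : Type*} [Fintype α] [DecidableEq α]

def mapsToPerms (t B : Finset α) : Finset (Perm α) := {σ | ∀ i ∈ t, σ i ∈ B}

lemma card_mapsToPerms_fiber_le {s B : Finset α} {a y : α} (ha : a ∉ s) (hy : y ∈ B) (z : α) :
    #{σ ∈ mapsToPerms s B | σ a = y} ≤ #{σ ∈ mapsToPerms s B | σ a = z} := by
  -- `σ` maps `s` away from `σ a = y`, so composing with `swap y z` keeps `s` inside `B`.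
  refine card_le_card_of_injOn (fun σ => swap y z * σ) ?_ fun σ₁ _ σ₂ _ h => mul_left_cancel h
  intro σ hσ
  simp only [mapsToPerms, coe_filter, mem_filter, mem_univ, true_and, Set.mem_ofPred_eq] at hσ ⊢
  obtain ⟨hsB, rfl⟩ := hσ
  refine ⟨fun i hi => ?_, by simp⟩
  have hne : σ i ≠ σ a := σ.injective.ne (by rintro rfl; exact ha hi)
  by_cases hz : σ i = z
  · simpa [hz] using hy
  · simpa [swap_apply_of_ne_of_ne hne hz] using hsB i hi

lemma card_mapsToPerms_insert_mul_le {s B : Finset α} {a : α} (ha : a ∉ s) :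
    #(mapsToPerms (insert a s) B) * Fintype.card α ≤ #B * #(mapsToPerms s B) := by
  have hins : mapsToPerms (insert a s) B = {σ ∈ mapsToPerms s B | σ a ∈ B} := by
    ext σ; simp [mapsToPerms, and_comm]
  have hfib : #(mapsToPerms s B) = ∑ z, #{σ ∈ mapsToPerms s B | σ a = z} :=
    card_eq_sum_card_fiberwise fun _ _ => mem_coe.2 (mem_univ _)
  rw [hins, ← sum_card_fiberwise_eq_card_filter, hfib, sum_mul]
  calc ∑ y ∈ B, #{σ ∈ mapsToPerms s B | σ a = y} * Fintype.card α
      = ∑ y ∈ B, ∑ _z : α, #{σ ∈ mapsToPerms s B | σ a = y} := by simp [mul_comm]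
    _ ≤ ∑ _y ∈ B, ∑ z, #{σ ∈ mapsToPerms s B | σ a = z} :=
        sum_le_sum fun y hy => sum_le_sum fun z _ => card_mapsToPerms_fiber_le ha hy z
    _ = #B * ∑ z, #{σ ∈ mapsToPerms s B | σ a = z} := by rw [sum_const, smul_eq_mul]

lemma card_mapsToPerms_mul_pow_le (t B : Finset α) :
    #(mapsToPerms t B) * Fintype.card α ^ #t ≤ #B ^ #t * Fintype.card (Perm α) := by
  induction t using Finset.induction_on with
  | empty => simp [mapsToPerms]
  | @insert a s ha ih =>
    rw [card_insert_of_notMem ha, pow_succ, pow_succ, ← mul_assoc, mul_right_comm,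
      mul_right_comm (#B ^ #s)]
    calc #(mapsToPerms (insert a s) B) * Fintype.card α * Fintype.card α ^ #s
        ≤ #B * #(mapsToPerms s B) * Fintype.card α ^ #s :=
          Nat.mul_le_mul_right _ (card_mapsToPerms_insert_mul_le ha)
      _ ≤ #B * (#B ^ #s * Fintype.card (Perm α)) := by rw [mul_assoc]; gcongr
      _ = #B ^ #s * Fintype.card (Perm α) * #B := by ring

lemma card_mapsToPerms_le (t B : Finset α) :
    (#(mapsToPerms t B) : ℝ) ≤ ((#B : ℝ) / Fintype.card α) ^ #t * Fintype.card (Perm α) := by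
  rcases t.eq_empty_or_nonempty with rfl | ⟨i, -⟩
  · simp [mapsToPerms]
  · have hα : (0 : ℝ) < Fintype.card α := by exact_mod_cast Fintype.card_pos_iff.mpr ⟨i⟩
    rw [div_pow, div_mul_eq_mul_div, le_div_iff₀ (by positivity)]
    exact_mod_cast card_mapsToPerms_mul_pow_le t B

lemma exp_mul_card_filter_eq_sum_powerset (A B : Finset α) (σ : Perm α) (θ : ℝ) :
    exp (θ * #{i ∈ A | σ i ∈ B}) =
      ∑ t ∈ A.powerset, if ∀ i ∈ t, σ i ∈ B then (exp θ - 1) ^ #t else 0 := by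
  have hfactor : ∀ i, exp (θ * if σ i ∈ B then 1 else 0) = 1 + if σ i ∈ B then exp θ - 1 else 0 :=
    fun i => by split_ifs <;> simp
  rw [card_filter, Nat.cast_sum, mul_sum, exp_sum]
  push_cast
  simp only [hfactor, prod_one_add, prod_ite_zero, prod_const]

lemma sum_perm_exp_mul_card_filter_le_of_nonneg (A B : Finset α) {θ : ℝ} (hθ : 0 ≤ θ) :
    ∑ σ : Perm α, exp (θ * #{i ∈ A | σ i ∈ B}) ≤
      (1 + (exp θ - 1) * (#B / Fintype.card α)) ^ #A * Fintype.card (Perm α) := by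
  have hc : 0 ≤ exp θ - 1 := sub_nonneg.2 (one_le_exp hθ)
  set p : ℝ := #B / Fintype.card α
  have hbinom : (1 + (exp θ - 1) * p) ^ #A = ∑ t ∈ A.powerset, ((exp θ - 1) * p) ^ #t := by
    simpa using prod_one_add (f := fun _ => (exp θ - 1) * p) A
  calc ∑ σ : Perm α, exp (θ * #{i ∈ A | σ i ∈ B})
      = ∑ t ∈ A.powerset, (exp θ - 1) ^ #t * #(mapsToPerms t B) := by
        simp_rw [exp_mul_card_filter_eq_sum_powerset, sum_comm (s := univ), sum_ite,
          sum_const_zero, add_zero, sum_const, nsmul_eq_mul, mapsToPerms, mul_comm]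
    _ ≤ ∑ t ∈ A.powerset, (exp θ - 1) ^ #t * (p ^ #t * Fintype.card (Perm α)) := by
        gcongr with t; exact card_mapsToPerms_le t B
    _ = (1 + (exp θ - 1) * p) ^ #A * Fintype.card (Perm α) := by
        simp_rw [hbinom, sum_mul, mul_pow, mul_assoc]

lemma sum_perm_exp_mul_card_filter_le_pow [Nonempty α] (A B : Finset α) (θ : ℝ) :
    ∑ σ : Perm α, exp (θ * #{i ∈ A | σ i ∈ B}) ≤
      (1 + (exp θ - 1) * (#B / Fintype.card α)) ^ #A * Fintype.card (Perm α) := by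
  rcases le_total 0 θ with hθ | hθ
  · exact sum_perm_exp_mul_card_filter_le_of_nonneg A B hθ
  -- For `θ ≤ 0`, count the points of `A` sent into `Bᶜ` instead and use `-θ ≥ 0`.
  have hn : (Fintype.card α : ℝ) ≠ 0 := by positivity
  have hcompl : ∀ σ : Perm α,
      exp (θ * #{i ∈ A | σ i ∈ B}) = exp θ ^ #A * exp (-θ * #{i ∈ A | σ i ∈ Bᶜ}) := by
    intro σ
    have hsplit := card_filter_add_card_filter_not (s := A) (fun i => σ i ∈ B)
    simp only [← mem_compl] at hsplit
    rw [← exp_nat_mul, ← exp_add, ← hsplit]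
    push_cast; ring_nf
  have hbase : exp θ * (1 + (exp (-θ) - 1) * (#Bᶜ / Fintype.card α)) =
      1 + (exp θ - 1) * (#B / Fintype.card α) := by
    rw [card_compl, Nat.cast_sub (card_le_univ B), exp_neg]
    field_simp
    ring
  calc ∑ σ : Perm α, exp (θ * #{i ∈ A | σ i ∈ B})
      = exp θ ^ #A * ∑ σ : Perm α, exp (-θ * #{i ∈ A | σ i ∈ Bᶜ}) := by
        rw [mul_sum]; exact sum_congr rfl fun σ _ => hcompl σ
    _ ≤ exp θ ^ #A * ((1 + (exp (-θ) - 1) * (#Bᶜ / Fintype.card α)) ^ #A *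
          Fintype.card (Perm α)) := by
        gcongr; exact sum_perm_exp_mul_card_filter_le_of_nonneg A Bᶜ (neg_nonneg.2 hθ)
    _ = (1 + (exp θ - 1) * (#B / Fintype.card α)) ^ #A * Fintype.card (Perm α) := by
        rw [← mul_assoc, ← mul_pow, hbase]

lemma sum_perm_exp_mul_card_filter_le [Nonempty α] (A B : Finset α) (θ : ℝ) :
    ∑ σ : Perm α, exp (θ * #{i ∈ A | σ i ∈ B}) ≤
      exp ((exp θ - 1) * (#A * #B / Fintype.card α)) * Fintype.card (Perm α) := by
  set p : ℝ := #B / Fintype.card α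
  have hp : p ≤ 1 := div_le_one_of_le₀ (by exact_mod_cast card_le_univ B) (by positivity)
  have hbase : 0 ≤ 1 + (exp θ - 1) * p := by nlinarith [exp_pos θ, show 0 ≤ p by positivity]
  calc ∑ σ : Perm α, exp (θ * #{i ∈ A | σ i ∈ B})
      ≤ (1 + (exp θ - 1) * p) ^ #A * Fintype.card (Perm α) :=
        sum_perm_exp_mul_card_filter_le_pow A B θ
    _ ≤ exp ((exp θ - 1) * p) ^ #A * Fintype.card (Perm α) := by
        gcongr; linarith [add_one_le_exp ((exp θ - 1) * p)]
    _ = exp ((exp θ - 1) * (#A * #B / Fintype.card α)) * Fintype.card (Perm α) := by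
        rw [← exp_nat_mul]; congr 2; ring

end SinglePermutation

section PermutationModel

variable {n d : ℕ}

lemma sum_exp_eperm_le [NeZero n] (A B : Finset (Fin n)) (θ : ℝ) :
    ∑ π : Fin d → Perm (Fin n), Real.exp (θ * eperm π A B) ≤
      Real.exp ((Real.exp θ - 1) * ((d : ℝ) / n * #A * #B)) *
        Fintype.card (Fin d → Perm (Fin n)) := by
  have hfactor : ∑ π : Fin d → Perm (Fin n), Real.exp (θ * eperm π A B) =
      (∑ σ : Perm (Fin n), Real.exp (θ * #{i ∈ A | σ i ∈ B})) ^ d := by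
    simp only [eperm, Nat.cast_sum, mul_sum, Real.exp_sum]
    rw [← Fintype.prod_sum fun (_ : Fin d) (σ : Perm (Fin n)) => Real.exp (θ * #{i ∈ A | σ i ∈ B}),
      prod_const, card_univ, Fintype.card_fin]
  rw [hfactor, Fintype.card_fun, Fintype.card_fin, Nat.cast_pow]
  calc (∑ σ : Perm (Fin n), Real.exp (θ * #{i ∈ A | σ i ∈ B})) ^ d
      ≤ (Real.exp ((Real.exp θ - 1) * (#A * #B / Fintype.card (Fin n))) *
          Fintype.card (Perm (Fin n))) ^ d := by
        gcongr; exact sum_perm_exp_mul_card_filter_le A B θ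
    _ = Real.exp ((Real.exp θ - 1) * ((d : ℝ) / n * #A * #B)) *
          Fintype.card (Perm (Fin n)) ^ d := by
        rw [mul_pow, ← Real.exp_nat_mul, Fintype.card_fin]; congr 2; ring

lemma prPerm_le_exp_of_sum_exp_le {E : (Fin d → Perm (Fin n)) → Prop}
    {f : (Fin d → Perm (Fin n)) → ℝ} {t M : ℝ} (hE : ∀ π, E π → t ≤ f π)
    (hM : ∑ π, Real.exp (f π) ≤ Real.exp M * Fintype.card (Fin d → Perm (Fin n))) :
    PrPerm n d E ≤ Real.exp (M - t) := by
  rw [PrPerm, div_le_iff₀ (by positivity)]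
  calc (#{π | E π} : ℝ)
      = ∑ π ∈ {π | E π}, 1 := by simp
    _ ≤ ∑ π ∈ {π | E π}, Real.exp (f π - t) :=
        sum_le_sum fun π hπ => Real.one_le_exp (sub_nonneg.2 (hE π (mem_filter.1 hπ).2))
    _ ≤ ∑ π, Real.exp (f π - t) :=
        sum_le_sum_of_subset_of_nonneg (subset_univ _) fun π _ _ => (Real.exp_pos _).le
    _ = Real.exp (-t) * ∑ π, Real.exp (f π) := by
        rw [mul_sum]; simp_rw [sub_eq_neg_add, Real.exp_add]
    _ ≤ Real.exp (-t) * (Real.exp M * Fintype.card (Fin d → Perm (Fin n))) := by gcongr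
    _ = Real.exp (M - t) * Fintype.card (Fin d → Perm (Fin n)) := by
        rw [sub_eq_add_neg, Real.exp_add]; ring

lemma prPerm_le_eperm_le_exp [NeZero n] (A B : Finset (Fin n)) {θ : ℝ} (hθ : 0 ≤ θ) (t : ℝ) :
    PrPerm n d (fun π => t ≤ eperm π A B) ≤
      Real.exp ((Real.exp θ - 1) * ((d : ℝ) / n * #A * #B) - θ * t) :=
  prPerm_le_exp_of_sum_exp_le (fun π (h : t ≤ eperm π A B) => mul_le_mul_of_nonneg_left h hθ)
    (sum_exp_eperm_le A B θ)

lemma prPerm_eperm_le_le_exp [NeZero n] (A B : Finset (Fin n)) {θ : ℝ} (hθ : 0 ≤ θ) (t : ℝ) :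
    PrPerm n d (fun π => eperm π A B ≤ t) ≤
      Real.exp ((Real.exp (-θ) - 1) * ((d : ℝ) / n * #A * #B) + θ * t) := by
  simpa [neg_mul] using prPerm_le_exp_of_sum_exp_le
    (fun π (h : eperm π A B ≤ t) => mul_le_mul_of_nonpos_left h (neg_nonpos.2 hθ))
    (sum_exp_eperm_le A B (-θ))

end PermutationModel

theorem stmt_7 :
    ∀ n d : ℕ, 1 ≤ n → 1 ≤ d → ∀ A B : Finset (Fin n), ∀ τ : ℝ, 0 ≤ τ →
      PrPerm n d (fun π =>
          (1 + τ) * (((d : ℝ) / n) * A.card * B.card) ≤ (eperm π A B : ℝ)) ≤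
        Real.exp (-(τ ^ 2 / (2 + τ)) * (((d : ℝ) / n) * A.card * B.card)) ∧
      PrPerm n d (fun π =>
          (eperm π A B : ℝ) ≤ (1 - τ) * (((d : ℝ) / n) * A.card * B.card)) ≤
        Real.exp (-(τ ^ 2 / 2) * (((d : ℝ) / n) * A.card * B.card)) := by
  intro n d hn _ A B τ hτ
  have : NeZero n := ⟨by omega⟩
  have hμ : 0 ≤ (d : ℝ) / n * #A * #B := by positivity
  constructor
  · have hθ : 0 ≤ Real.log (1 + τ) := Real.log_nonneg (by linarith)
    refine (prPerm_le_eperm_le_exp A B hθ _).trans (Real.exp_le_exp.2 ?_)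
    rw [Real.exp_log (by linarith), add_sub_cancel_left]
    nlinarith [mul_le_mul_of_nonneg_right (sub_mul_log_one_add_le hτ) hμ]
  · refine (prPerm_eperm_le_le_exp A B hτ _).trans (Real.exp_le_exp.2 ?_)
    nlinarith [mul_le_mul_of_nonneg_right (exp_neg_le_one_sub_add_sq_div_two hτ) hμ]
end
end

section
/- For every n ≥ 3, every d with 0 ≤ d ≤ n, and every ordered pair (j1, j2) ∈ [n]², the reflection map Ψ_{(j1,j2)} maps M_{n,d} into M_{n,d} and is an involution (Ψ composed with itself is the identity on M_{n,d}). Consequently, if M is a uniform random element of M_{n,d} and (J1, J2) are random column indices in [n] independent of M, then setting M̃ = Ψ_{(J1,J2)}(M), the pair (M, M̃) is exchangeable, i.e., (M, M̃) and (M̃, M) have the same joint distribution, and M̃ is uniform on M_{n,d}. -/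
open scoped Classical

noncomputable section

/-- The set of `n × n` zero-one matrices (encoded as `Bool`-valued functions) in which
every row sum and every column sum equals `d`. -/
def regSet (n d : ℕ) : Finset (Fin n → Fin n → Bool) :=
  Finset.univ.filter fun M =>
    (∀ i, (Finset.univ.filter fun j => M i j = true).card = d) ∧
    (∀ j, (Finset.univ.filter fun i => M i j = true).card = d)

/-- Probability of the event `E` under the uniform distribution on `regSet n d`. -/
def Pr (n d : ℕ) (E : (Fin n → Fin n → Bool) → Prop) : ℝ :=
  (((regSet n d).filter E).card : ℝ) / ((regSet n d).card : ℝ)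

/-- The walk associated to the ordered pair of columns `(j1, j2)`:
`walk M j1 j2 i` is the position after reading the first `i` rows
(the rows of `M` are `0`-indexed, so this corresponds to
`w_{(j1,j2)}(i) = Σ_{k=1}^{i} (1[M(k,j1)=1, M(k,j2)=0] − 1[M(k,j1)=0, M(k,j2)=1])`
in `1`-indexed notation). -/
def walk {n : ℕ} (M : Fin n → Fin n → Bool) (j1 j2 : Fin n) (i : ℕ) : ℤ :=
  ∑ k ∈ Finset.univ.filter (fun k : Fin n => (k : ℕ) < i),
    ((if M k j1 = true ∧ M k j2 = false then (1 : ℤ) else 0) -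
      (if M k j1 = false ∧ M k j2 = true then (1 : ℤ) else 0))

/-- The ordered pair `(j1, j2)` is reflecting for `M` if the walk moves to `+1` on the
first step, leaves `+1` on the second step, and returns to `+1` at some time in `[3, n]`. -/
def reflecting {n : ℕ} (M : Fin n → Fin n → Bool) (j1 j2 : Fin n) : Prop :=
  walk M j1 j2 1 = 1 ∧ walk M j1 j2 2 ≠ 1 ∧ ∃ i : ℕ, 3 ≤ i ∧ i ≤ n ∧ walk M j1 j2 i = 1

/-- The first return time `i* ∈ [3, n]` of the walk to `+1` (for a reflecting pair). -/
def istar {n : ℕ} (M : Fin n → Fin n → Bool) (j1 j2 : Fin n) : ℕ :=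
  sInf {i : ℕ | 3 ≤ i ∧ i ≤ n ∧ walk M j1 j2 i = 1}

/-- The reflection map `Ψ_{(j1,j2)}`: if `(j1,j2)` is reflecting for `M`, swap the entries
in columns `j1` and `j2` for all rows `i` (in `1`-indexed notation) with `2 ≤ i ≤ i*`;
otherwise leave `M` unchanged.  Here row `i` of the paper corresponds to the `Fin n`
index with value `i − 1`, so the condition reads `2 ≤ i + 1 ≤ i*` for `i : Fin n`. -/
def Psi {n : ℕ} (j1 j2 : Fin n) (M : Fin n → Fin n → Bool) :
    Fin n → Fin n → Bool :=
  fun i j =>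
    if reflecting M j1 j2 ∧ 2 ≤ (i : ℕ) + 1 ∧ (i : ℕ) + 1 ≤ istar M j1 j2 then
      if j = j1 then M i j2 else if j = j2 then M i j1 else M i j
    else M i j


section Aux

variable {n : ℕ}

/-- The step of the walk at row `k`. -/
def stp (M : Fin n → Fin n → Bool) (j1 j2 : Fin n) (k : Fin n) : ℤ :=
  (if M k j1 = true ∧ M k j2 = false then (1 : ℤ) else 0) -
    (if M k j1 = false ∧ M k j2 = true then (1 : ℤ) else 0)

lemma stp_eq (M : Fin n → Fin n → Bool) (j1 j2 k : Fin n) :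
    stp M j1 j2 k = (if M k j1 = true then (1 : ℤ) else 0) -
      (if M k j2 = true then (1 : ℤ) else 0) := by
  unfold stp; cases h1 : M k j1 <;> cases h2 : M k j2 <;> simp [h1, h2]

lemma walk_eq_sum (M : Fin n → Fin n → Bool) (j1 j2 : Fin n) (i : ℕ) :
    walk M j1 j2 i =
      ∑ k ∈ Finset.univ.filter (fun k : Fin n => (k : ℕ) < i), stp M j1 j2 k := rfl

lemma walk_sub (M : Fin n → Fin n → Bool) (j1 j2 : Fin n) {a b : ℕ} (hab : a ≤ b) :
    walk M j1 j2 b = walk M j1 j2 a +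
      ∑ k ∈ Finset.univ.filter (fun k : Fin n => a ≤ (k : ℕ) ∧ (k : ℕ) < b),
        stp M j1 j2 k := by
  rw [walk_eq_sum, walk_eq_sum,
    ← Finset.sum_filter_add_sum_filter_not
      (Finset.univ.filter (fun k : Fin n => (k : ℕ) < b)) (fun k => (k : ℕ) < a)]
  congr 1
  · apply Finset.sum_congr _ (fun _ _ => rfl)
    rw [Finset.filter_filter]
    apply Finset.filter_congr
    intro k _
    omega
  · apply Finset.sum_congr _ (fun _ _ => rfl)
    rw [Finset.filter_filter]
    apply Finset.filter_congr
    intro k _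
    omega

lemma ne_of_reflecting {M : Fin n → Fin n → Bool} {j1 j2 : Fin n}
    (h : reflecting M j1 j2) : j1 ≠ j2 := by
  rintro rfl
  have h1 := h.1
  rw [walk_eq_sum] at h1
  have : ∀ k : Fin n, stp M j1 j1 k = 0 := by
    intro k; unfold stp; cases hk : M k j1 <;> simp [hk]
  simp [this] at h1

lemma istar_spec {M : Fin n → Fin n → Bool} {j1 j2 : Fin n}
    (h : reflecting M j1 j2) :
    3 ≤ istar M j1 j2 ∧ istar M j1 j2 ≤ n ∧ walk M j1 j2 (istar M j1 j2) = 1 :=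
  Nat.sInf_mem h.2.2

lemma istar_le {M : Fin n → Fin n → Bool} {j1 j2 : Fin n} {i : ℕ}
    (h3 : 3 ≤ i) (hin : i ≤ n) (hw : walk M j1 j2 i = 1) : istar M j1 j2 ≤ i :=
  Nat.sInf_le ⟨h3, hin, hw⟩

lemma Psi_apply (M : Fin n → Fin n → Bool) (j1 j2 : Fin n) (i j : Fin n) :
    Psi j1 j2 M i j =
      if reflecting M j1 j2 ∧ 1 ≤ (i : ℕ) ∧ (i : ℕ) < istar M j1 j2 then
        (if j = j1 then M i j2 else if j = j2 then M i j1 else M i j)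
      else M i j := by
  unfold Psi
  congr 1
  simp only [eq_iff_iff, and_congr_right_iff]
  intro _
  omega

lemma Psi_of_not_reflecting {M : Fin n → Fin n → Bool} {j1 j2 : Fin n}
    (h : ¬ reflecting M j1 j2) : Psi j1 j2 M = M := by
  funext i j
  rw [Psi_apply, if_neg (by tauto)]

lemma Psi_j1 {M : Fin n → Fin n → Bool} {j1 j2 : Fin n}
    (h : reflecting M j1 j2) {k : Fin n} (hk : 1 ≤ (k : ℕ) ∧ (k : ℕ) < istar M j1 j2) :
    Psi j1 j2 M k j1 = M k j2 := by
  rw [Psi_apply, if_pos ⟨h, hk⟩, if_pos rfl]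

lemma Psi_j2 {M : Fin n → Fin n → Bool} {j1 j2 : Fin n}
    (h : reflecting M j1 j2) {k : Fin n} (hk : 1 ≤ (k : ℕ) ∧ (k : ℕ) < istar M j1 j2) :
    Psi j1 j2 M k j2 = M k j1 := by
  rw [Psi_apply, if_pos ⟨h, hk⟩, if_neg (ne_of_reflecting h).symm, if_pos rfl]

lemma Psi_out {M : Fin n → Fin n → Bool} {j1 j2 : Fin n} {k j : Fin n}
    (hk : ¬ (1 ≤ (k : ℕ) ∧ (k : ℕ) < istar M j1 j2)) :
    Psi j1 j2 M k j = M k j := by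
  rw [Psi_apply, if_neg (fun hc => hk hc.2)]

lemma stp_Psi {M : Fin n → Fin n → Bool} {j1 j2 : Fin n}
    (h : reflecting M j1 j2) (k : Fin n) :
    stp (Psi j1 j2 M) j1 j2 k =
      if 1 ≤ (k : ℕ) ∧ (k : ℕ) < istar M j1 j2 then - stp M j1 j2 k
      else stp M j1 j2 k := by
  by_cases hk : 1 ≤ (k : ℕ) ∧ (k : ℕ) < istar M j1 j2
  · rw [if_pos hk, stp_eq, stp_eq, Psi_j1 h hk, Psi_j2 h hk]
    ring
  · rw [if_neg hk, stp_eq, stp_eq, Psi_out hk, Psi_out hk]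

lemma walk_Psi {M : Fin n → Fin n → Bool} {j1 j2 : Fin n}
    (h : reflecting M j1 j2) {i : ℕ} (hi : 1 ≤ i) :
    walk (Psi j1 j2 M) j1 j2 i =
      walk M j1 j2 i - 2 * (walk M j1 j2 (min i (istar M j1 j2)) - 1) := by
  have h3 := (istar_spec h).1
  have key : ∑ k ∈ Finset.univ.filter
      (fun k : Fin n => 1 ≤ (k : ℕ) ∧ (k : ℕ) < min i (istar M j1 j2)),
      stp M j1 j2 k = walk M j1 j2 (min i (istar M j1 j2)) - 1 := by
    have hws := walk_sub M j1 j2 (a := 1) (b := min i (istar M j1 j2))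
      (le_min hi (by omega))
    have h1 := h.1
    linarith
  rw [walk_eq_sum]
  rw [Finset.sum_congr rfl (fun k _ => by
    rw [stp_Psi h]
    split <;> ring
    : ∀ k ∈ Finset.univ.filter (fun k : Fin n => (k : ℕ) < i),
        stp (Psi j1 j2 M) j1 j2 k =
        stp M j1 j2 k - 2 * (if 1 ≤ (k : ℕ) ∧ (k : ℕ) < istar M j1 j2
          then stp M j1 j2 k else 0))]
  rw [Finset.sum_sub_distrib, ← Finset.mul_sum, ← walk_eq_sum, ← Finset.sum_filter,
    Finset.filter_filter]
  rw [show (Finset.univ.filter fun k : Fin n =>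
      (k : ℕ) < i ∧ 1 ≤ (k : ℕ) ∧ (k : ℕ) < istar M j1 j2) =
      Finset.univ.filter (fun k : Fin n =>
      1 ≤ (k : ℕ) ∧ (k : ℕ) < min i (istar M j1 j2)) from
    Finset.filter_congr (fun k _ => by omega)]
  rw [key]

lemma reflecting_Psi {M : Fin n → Fin n → Bool} {j1 j2 : Fin n}
    (h : reflecting M j1 j2) : reflecting (Psi j1 j2 M) j1 j2 := by
  obtain ⟨h3, hn', hw⟩ := istar_spec h
  have h1 := h.1
  have h2 := h.2.1
  refine ⟨?_, ?_, istar M j1 j2, h3, hn', ?_⟩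
  · rw [walk_Psi h (by omega), min_eq_left (by omega), h1]; ring
  · rw [walk_Psi h (by omega), min_eq_left (by omega)]
    intro hc
    apply h2
    linarith
  · rw [walk_Psi h (by omega), min_self, hw]; ring

lemma istar_Psi {M : Fin n → Fin n → Bool} {j1 j2 : Fin n}
    (h : reflecting M j1 j2) : istar (Psi j1 j2 M) j1 j2 = istar M j1 j2 := by
  obtain ⟨h3, hn', hw⟩ := istar_spec h
  have h' := reflecting_Psi h
  obtain ⟨h3', hn'', hw'⟩ := istar_spec h'
  refine le_antisymm ?_ ?_
  · exact istar_le h3 hn' (by rw [walk_Psi h (by omega), min_self, hw]; ring)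
  · by_contra hc
    push_neg at hc
    have hlt : istar (Psi j1 j2 M) j1 j2 < istar M j1 j2 := hc
    have hmin : min (istar (Psi j1 j2 M) j1 j2) (istar M j1 j2) =
        istar (Psi j1 j2 M) j1 j2 := min_eq_left (le_of_lt hlt)
    have := walk_Psi h (i := istar (Psi j1 j2 M) j1 j2) (by omega)
    rw [hmin, hw'] at this
    have hwi : walk M j1 j2 (istar (Psi j1 j2 M) j1 j2) = 1 := by linarith
    exact absurd (istar_le h3' hn'' hwi) (by omega)

lemma Psi_Psi (M : Fin n → Fin n → Bool) (j1 j2 : Fin n) :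
    Psi j1 j2 (Psi j1 j2 M) = M := by
  by_cases h : reflecting M j1 j2
  · have h' := reflecting_Psi h
    have hi := istar_Psi h
    have hne := ne_of_reflecting h
    funext k j
    by_cases hk : 1 ≤ (k : ℕ) ∧ (k : ℕ) < istar M j1 j2
    · have hk' : 1 ≤ (k : ℕ) ∧ (k : ℕ) < istar (Psi j1 j2 M) j1 j2 := by
        rw [hi]; exact hk
      by_cases hj1 : j = j1
      · subst hj1; rw [Psi_j1 h' hk', Psi_j2 h hk]
      by_cases hj2 : j = j2
      · subst hj2; rw [Psi_j2 h' hk', Psi_j1 h hk]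
      · rw [Psi_apply, if_pos ⟨h', hk'⟩, if_neg hj1, if_neg hj2,
          Psi_apply, if_pos ⟨h, hk⟩, if_neg hj1, if_neg hj2]
    · have hk' : ¬ (1 ≤ (k : ℕ) ∧ (k : ℕ) < istar (Psi j1 j2 M) j1 j2) := by
        rw [hi]; exact hk
      rw [Psi_out hk', Psi_out hk]
  · rw [Psi_of_not_reflecting h, Psi_of_not_reflecting h]

lemma row_card (M : Fin n → Fin n → Bool) (j1 j2 : Fin n) (i : Fin n) :
    (Finset.univ.filter fun j => Psi j1 j2 M i j = true).card =
      (Finset.univ.filter fun j => M i j = true).card := by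
  by_cases h : reflecting M j1 j2
  · by_cases hk : 1 ≤ (i : ℕ) ∧ (i : ℕ) < istar M j1 j2
    · have hne := ne_of_reflecting h
      have hswap : ∀ j, Psi j1 j2 M i j = M i (Equiv.swap j1 j2 j) := by
        intro j
        by_cases hj1 : j = j1
        · subst hj1; rw [Psi_j1 h hk, Equiv.swap_apply_left]
        by_cases hj2 : j = j2
        · subst hj2; rw [Psi_j2 h hk, Equiv.swap_apply_right]
        · rw [Psi_apply, if_pos ⟨h, hk⟩, if_neg hj1, if_neg hj2,
            Equiv.swap_apply_of_ne_of_ne hj1 hj2]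
      apply Finset.card_bij' (fun j _ => Equiv.swap j1 j2 j)
        (fun j _ => Equiv.swap j1 j2 j)
      · intro a ha
        simp only [Finset.mem_filter, Finset.mem_univ, true_and] at ha ⊢
        rw [← hswap]; exact ha
      · intro a ha
        simp only [Finset.mem_filter, Finset.mem_univ, true_and] at ha ⊢
        rw [hswap, Equiv.swap_apply_self]; exact ha
      · intro a _; exact Equiv.swap_apply_self _ _ a
      · intro a _; exact Equiv.swap_apply_self _ _ a
    · congr 1
      apply Finset.filter_congr
      intro j _
      rw [Psi_out hk]
  · rw [Psi_of_not_reflecting h]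

lemma card_filter_int (p : Fin n → Prop) [DecidablePred p] :
    ((Finset.univ.filter p).card : ℤ) = ∑ i : Fin n, if p i then (1 : ℤ) else 0 := by
  rw [Finset.card_filter]
  push_cast
  rfl

lemma sum_stp_swapset {M : Fin n → Fin n → Bool} {j1 j2 : Fin n}
    (h : reflecting M j1 j2) :
    ∑ k ∈ Finset.univ.filter
      (fun k : Fin n => 1 ≤ (k : ℕ) ∧ (k : ℕ) < istar M j1 j2),
      stp M j1 j2 k = 0 := by
  obtain ⟨h3, hn', hw⟩ := istar_spec h
  have hws := walk_sub M j1 j2 (a := 1) (b := istar M j1 j2) (by omega)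
  have h1 := h.1
  linarith

lemma col_card (M : Fin n → Fin n → Bool) (j1 j2 : Fin n) (j : Fin n) :
    (Finset.univ.filter fun i => Psi j1 j2 M i j = true).card =
      (Finset.univ.filter fun i => M i j = true).card := by
  by_cases h : reflecting M j1 j2
  · have hne := ne_of_reflecting h
    by_cases hj1 : j = j1
    · rw [hj1]
      have hz : ∑ i : Fin n, ((if Psi j1 j2 M i j1 = true then (1 : ℤ) else 0) -
          (if M i j1 = true then (1 : ℤ) else 0)) = 0 := by
        rw [Finset.sum_congr rfl (fun i _ => by
          by_cases hk : 1 ≤ (i : ℕ) ∧ (i : ℕ) < istar M j1 j2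
          · rw [Psi_j1 h hk]
            rw [if_pos hk, stp_eq]
            ring
          · rw [Psi_out hk, if_neg hk]
            ring
          : ∀ i ∈ Finset.univ, ((if Psi j1 j2 M i j1 = true then (1 : ℤ) else 0) -
            (if M i j1 = true then (1 : ℤ) else 0)) =
            (if 1 ≤ (i : ℕ) ∧ (i : ℕ) < istar M j1 j2 then - stp M j1 j2 i else 0))]
        rw [← Finset.sum_filter, Finset.sum_neg_distrib, sum_stp_swapset h, neg_zero]
      have := card_filter_int (fun i => Psi j1 j2 M i j1 = true)
      have := card_filter_int (fun i : Fin n => M i j1 = true)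
      rw [Finset.sum_sub_distrib] at hz
      omega
    by_cases hj2 : j = j2
    · rw [hj2]
      have hz : ∑ i : Fin n, ((if Psi j1 j2 M i j2 = true then (1 : ℤ) else 0) -
          (if M i j2 = true then (1 : ℤ) else 0)) = 0 := by
        rw [Finset.sum_congr rfl (fun i _ => by
          by_cases hk : 1 ≤ (i : ℕ) ∧ (i : ℕ) < istar M j1 j2
          · rw [Psi_j2 h hk]
            rw [if_pos hk, stp_eq]
          · rw [Psi_out hk, if_neg hk]
            ring
          : ∀ i ∈ Finset.univ, ((if Psi j1 j2 M i j2 = true then (1 : ℤ) else 0) -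
            (if M i j2 = true then (1 : ℤ) else 0)) =
            (if 1 ≤ (i : ℕ) ∧ (i : ℕ) < istar M j1 j2 then stp M j1 j2 i else 0))]
        rw [← Finset.sum_filter, sum_stp_swapset h]
      have := card_filter_int (fun i => Psi j1 j2 M i j2 = true)
      have := card_filter_int (fun i : Fin n => M i j2 = true)
      rw [Finset.sum_sub_distrib] at hz
      omega
    · congr 1
      apply Finset.filter_congr
      intro i _
      rw [Psi_apply]
      split <;> simp [hj1, hj2]
  · rw [Psi_of_not_reflecting h]

lemma Psi_mem_regSet {d : ℕ} (j1 j2 : Fin n) {M : Fin n → Fin n → Bool}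
    (hM : M ∈ regSet n d) : Psi j1 j2 M ∈ regSet n d := by
  rw [regSet, Finset.mem_filter] at hM ⊢
  exact ⟨Finset.mem_univ _,
    fun i => (row_card M j1 j2 i).trans (hM.2.1 i),
    fun j => (col_card M j1 j2 j).trans (hM.2.2 j)⟩

lemma uniform_map_eq {α β : Type*} (s : Finset α) (h : s.Nonempty) (f g : α → β)
    (e : α → α) (he1 : ∀ a ∈ s, e a ∈ s) (he2 : ∀ a ∈ s, e (e a) = a)
    (hfg : ∀ a ∈ s, f (e a) = g a) :
    (PMF.uniformOfFinset s h).map f = (PMF.uniformOfFinset s h).map g := by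
  have key : ∀ (f : α → β) (b : β),
      (∑' a, if b = f a then (PMF.uniformOfFinset s h) a else 0) =
        ((s.filter (fun a => b = f a)).card : ENNReal) * ((s.card : ENNReal))⁻¹ := by
    intro f b
    rw [tsum_eq_sum (s := s) (fun a ha => by
      rw [PMF.uniformOfFinset_apply, if_neg ha, ite_self])]
    rw [Finset.sum_congr rfl (fun a ha => by
      rw [PMF.uniformOfFinset_apply, if_pos ha]
      : ∀ a ∈ s, (if b = f a then (PMF.uniformOfFinset s h) a else 0) =
        (if b = f a then ((s.card : ENNReal))⁻¹ else 0))]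
    rw [← Finset.sum_filter, Finset.sum_const, nsmul_eq_mul]
  apply PMF.ext
  intro b
  rw [PMF.map_apply, PMF.map_apply, key, key]
  congr 1
  rw [Nat.cast_inj]
  apply Finset.card_bij' (fun a _ => e a) (fun a _ => e a)
  · intro a ha
    rw [Finset.mem_filter] at ha ⊢
    exact ⟨he1 a ha.1, by rw [← hfg (e a) (he1 a ha.1), he2 a ha.1]; exact ha.2⟩
  · intro a ha
    rw [Finset.mem_filter] at ha ⊢
    refine ⟨he1 a ha.1, ?_⟩
    rw [hfg a ha.1]
    exact ha.2
  · intro a ha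
    rw [Finset.mem_filter] at ha
    exact he2 a ha.1
  · intro a ha
    rw [Finset.mem_filter] at ha
    exact he2 a ha.1

end Aux

theorem stmt_16 (n d : ℕ) (hn : 3 ≤ n) (hd : d ≤ n) :
    (∀ j1 j2 : Fin n, ∀ M ∈ regSet n d, Psi j1 j2 M ∈ regSet n d) ∧
    (∀ j1 j2 : Fin n, ∀ M ∈ regSet n d, Psi j1 j2 (Psi j1 j2 M) = M) ∧
    (∀ h : (regSet n d).Nonempty, ∀ ι : PMF (Fin n × Fin n),
      -- the joint law of `(M, M̃)`, with the column indices drawn from `ι`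
      -- independently of `M`
      (ι.bind fun v => (PMF.uniformOfFinset (regSet n d) h).map
          fun M => (M, Psi v.1 v.2 M)).map Prod.swap =
        (ι.bind fun v => (PMF.uniformOfFinset (regSet n d) h).map
          fun M => (M, Psi v.1 v.2 M)) ∧
      (ι.bind fun v => (PMF.uniformOfFinset (regSet n d) h).map
          fun M => (M, Psi v.1 v.2 M)).map Prod.snd =
        PMF.uniformOfFinset (regSet n d) h) := by
  refine ⟨fun j1 j2 M hM => Psi_mem_regSet j1 j2 hM,
    fun j1 j2 M _ => Psi_Psi M j1 j2, ?_⟩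
  intro h ι
  constructor
  · rw [PMF.map_bind]
    refine congrArg _ (funext fun v => ?_)
    rw [PMF.map_comp]
    apply uniform_map_eq _ h _ _ (Psi v.1 v.2)
      (fun M hM => Psi_mem_regSet _ _ hM) (fun M _ => Psi_Psi M v.1 v.2)
    intro a _
    show Prod.swap (Psi v.1 v.2 a, Psi v.1 v.2 (Psi v.1 v.2 a)) = (a, Psi v.1 v.2 a)
    rw [Psi_Psi]
    rfl
  · rw [PMF.map_bind]
    have hv : ∀ v : Fin n × Fin n,
        ((PMF.uniformOfFinset (regSet n d) h).map
          fun M => (M, Psi v.1 v.2 M)).map Prod.snd =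
        PMF.uniformOfFinset (regSet n d) h := by
      intro v
      rw [PMF.map_comp]
      have heq : (Prod.snd ∘ fun M : Fin n → Fin n → Bool => (M, Psi v.1 v.2 M)) =
          fun M => Psi v.1 v.2 M := rfl
      rw [heq]
      have := uniform_map_eq (regSet n d) h (fun M => Psi v.1 v.2 M) id
        (Psi v.1 v.2) (fun M hM => Psi_mem_regSet _ _ hM)
        (fun M _ => Psi_Psi M v.1 v.2) (fun M _ => Psi_Psi M v.1 v.2)
      rw [this, PMF.map_id]
    rw [funext hv, PMF.bind_const]
end
end

section
/- Let n ≥ 1, let d ∈ {1,…,n}, and let M ∈ M_{n,d} be a fixed matrix with the property that for some ε > 0 and for every pair of distinct i1, i2 ∈ [n], max( co_M(i1,i2), co_{Mᵀ}(i1,i2) ) ≤ (1+ε)·p²·n, where p = d/n. Then for every pair of subsets A, B ⊆ [n] with |A| ≥ n/(ε·d) and |B| ≥ n/(ε·d), one has | e_M(A,B)/(p·|A|·|B|) − 1 | ≤ sqrt( 2·ε·n / max(|A|, |B|) ). -/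
/-!
Let `x i` be the number of out-neighbours of `i` in `B`. The column sums give `∑ x i = d|B|`,
and expanding `∑ (x i)²` as a sum of column codegrees over pairs in `B` gives
`∑ (x i)² ≤ |B| d + |B|(|B| - 1)(1 + ε)p²n`. Hence the variance `∑ (x i - p|B|)²` is at most
`|B| d + εp²n|B|²`, which is `≤ 2εp²n|B|²` once `|B| ≥ n/(εd)`. Cauchy–Schwarz over `A` bounds
`(e(A,B) - p|A||B|)²` by `|A|` times this variance, which gives the claim with `|A|` in the
denominator; applying this to the transpose swaps the roles of `A` and `B`.
-/

open scoped Classical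

noncomputable section

/-- Codegree: number of common out-neighbors of rows `i1` and `i2`. -/
def codeg {n : ℕ} (M : Fin n → Fin n → Bool) (i1 i2 : Fin n) : ℕ :=
  (Finset.univ.filter fun j => M i1 j = true ∧ M i2 j = true).card

/-- Number of edges from `A` to `B`. -/
def ecount {n : ℕ} (M : Fin n → Fin n → Bool) (A B : Finset (Fin n)) : ℕ :=
  ((A ×ˢ B).filter fun q => M q.1 q.2 = true).card

/-- `μ(A,B) = p·|A|·|B|` where `p = d/n`. -/
def mu (n d : ℕ) (A B : Finset (Fin n)) : ℝ :=
  ((d : ℝ) / n) * A.card * B.card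

/-- `μ̂(A,B) = p·min(|A||B|, (n−|A|)(n−|B|))` where `p = d/n`. -/
def muhat (n d : ℕ) (A B : Finset (Fin n)) : ℝ :=
  ((d : ℝ) / n) * min ((A.card * B.card : ℕ) : ℝ)
    (((n - A.card) * (n - B.card) : ℕ) : ℝ)

/-- The event that all codegrees are within `η·p(1−p)·n` of `p²n`. -/
def Gco (n d : ℕ) (η : ℝ) (M : Fin n → Fin n → Bool) : Prop :=
  ∀ i1 i2 : Fin n, i1 ≠ i2 →
    |(codeg M i1 i2 : ℝ) - ((d : ℝ) / n) ^ 2 * n| ≤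
      η * ((d : ℝ) / n) * (1 - (d : ℝ) / n) * n

open Finset

lemma ecount_transpose {n : ℕ} (M : Fin n → Fin n → Bool) (A B : Finset (Fin n)) :
    ecount (fun i j => M j i) B A = ecount M A B := by
  unfold ecount
  rw [card_filter, card_filter, sum_product, sum_product, sum_comm]

lemma abs_div_sub_one_le_sqrt {e μ t : ℝ} (hμ : 0 < μ) (h : (e - μ) ^ 2 ≤ t * μ ^ 2) :
    |e / μ - 1| ≤ Real.sqrt t := by
  rw [← Real.sqrt_sq_eq_abs]
  apply Real.sqrt_le_sqrt
  rwa [div_sub_one hμ.ne', div_pow, div_le_iff₀ (by positivity)]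

lemma nonempty_of_pos_le_card {α : Type*} {s : Finset α} {x : ℝ} (hx : 0 < x)
    (h : x ≤ #s) : s.Nonempty :=
  card_pos.mp (by exact_mod_cast hx.trans_le h)

section DegreeInto

variable {n : ℕ} (M : Fin n → Fin n → Bool) (B : Finset (Fin n))

def degIn (i : Fin n) : ℕ := #{j ∈ B | M i j = true}

lemma ecount_eq_sum_degIn (A : Finset (Fin n)) : ecount M A B = ∑ i ∈ A, degIn M B i := by
  simp only [ecount, degIn, card_filter, sum_product]

lemma sum_degIn {d : ℕ} (hcol : ∀ j, #{i | M i j = true} = d) :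
    ∑ i, degIn M B i = d * #B := by
  simp only [degIn, card_filter]
  rw [sum_comm]
  simp only [← card_filter, hcol, sum_const, smul_eq_mul, mul_comm]

lemma codeg_transpose_self (j : Fin n) :
    codeg (fun i j => M j i) j j = #{i | M i j = true} := by
  simp [codeg]

lemma sum_degIn_sq :
    ∑ i, degIn M B i ^ 2 = ∑ j₁ ∈ B, ∑ j₂ ∈ B, codeg (fun i j => M j i) j₁ j₂ := by
  simp only [degIn, codeg, card_filter, sq, sum_mul_sum, ite_zero_mul_ite_zero, mul_one]
  rw [sum_comm]
  exact sum_congr rfl fun j₁ _ => sum_comm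

lemma sum_degIn_sq_le {d : ℕ} {K : ℝ} (hcol : ∀ j, #{i | M i j = true} = d)
    (hco : ∀ j₁ j₂, j₁ ≠ j₂ → (codeg (fun i j => M j i) j₁ j₂ : ℝ) ≤ K) :
    ∑ i, (degIn M B i : ℝ) ^ 2 ≤ #B * (d + (#B - 1) * K) := by
  have hcodeg_sum (j₁) (hj₁ : j₁ ∈ B) :
      ∑ j₂ ∈ B, (codeg (fun i j => M j i) j₁ j₂ : ℝ) ≤ d + (#B - 1) * K := by
    rw [← add_sum_erase _ _ hj₁, codeg_transpose_self, hcol]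
    gcongr
    calc ∑ j₂ ∈ B.erase j₁, (codeg (fun i j => M j i) j₁ j₂ : ℝ)
        ≤ ∑ _j₂ ∈ B.erase j₁, K :=
          sum_le_sum fun j₂ hj₂ => hco _ _ (ne_of_mem_erase hj₂).symm
      _ = (#B - 1) * K := by rw [sum_const, nsmul_eq_mul, cast_card_erase_of_mem hj₁]
  calc ∑ i, (degIn M B i : ℝ) ^ 2
      = ∑ j₁ ∈ B, ∑ j₂ ∈ B, (codeg (fun i j => M j i) j₁ j₂ : ℝ) := by
        exact_mod_cast sum_degIn_sq M B
    _ ≤ ∑ _j₁ ∈ B, (d + (#B - 1) * K) := sum_le_sum hcodeg_sum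
    _ = #B * (d + (#B - 1) * K) := by rw [sum_const, nsmul_eq_mul]

lemma sum_sq_degIn_sub_le {d : ℕ} {K : ℝ} (hcol : ∀ j, #{i | M i j = true} = d)
    (hco : ∀ j₁ j₂, j₁ ≠ j₂ → (codeg (fun i j => M j i) j₁ j₂ : ℝ) ≤ K) :
    ∑ i, ((degIn M B i : ℝ) - d / n * #B) ^ 2 ≤
      #B * (d + (#B - 1) * K) - ((d : ℝ) / n) ^ 2 * n * #B ^ 2 := by
  set p : ℝ := d / n with hp
  have hsum : ∑ i, (degIn M B i : ℝ) = d * #B := by exact_mod_cast sum_degIn M B hcol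
  have hpd : p * d = p ^ 2 * n := by
    rcases eq_or_ne n 0 with rfl | hn
    · simp [p]
    · rw [hp]
      field_simp
  have hexpand : ∑ i, ((degIn M B i : ℝ) - p * #B) ^ 2 =
      ∑ i, (degIn M B i : ℝ) ^ 2 - 2 * (p * #B) * ∑ i, (degIn M B i : ℝ) + n * (p * #B) ^ 2 := by
    simp only [sub_sq, sum_add_distrib, sum_sub_distrib, ← mul_sum, ← sum_mul, sum_const,
      card_univ, Fintype.card_fin, nsmul_eq_mul]
    ring
  rw [hexpand, hsum]
  linear_combination sum_degIn_sq_le M B hcol hco - 2 * (#B : ℝ) ^ 2 * hpd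

lemma sq_ecount_sub_le (A : Finset (Fin n)) (c : ℝ) :
    ((ecount M A B : ℝ) - #A * c) ^ 2 ≤ #A * ∑ i, ((degIn M B i : ℝ) - c) ^ 2 := by
  have hdev : (ecount M A B : ℝ) - #A * c = ∑ i ∈ A, ((degIn M B i : ℝ) - c) := by
    rw [sum_sub_distrib, sum_const, nsmul_eq_mul, ecount_eq_sum_degIn, Nat.cast_sum]
  rw [hdev]
  calc (∑ i ∈ A, ((degIn M B i : ℝ) - c)) ^ 2
      ≤ #A * ∑ i ∈ A, ((degIn M B i : ℝ) - c) ^ 2 := sq_sum_le_card_mul_sum_sq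
    _ ≤ #A * ∑ i, ((degIn M B i : ℝ) - c) ^ 2 :=
        mul_le_mul_of_nonneg_left
          (sum_le_sum_of_subset_of_nonneg (subset_univ A) fun i _ _ => sq_nonneg _)
          (by positivity)

lemma abs_ecount_div_sub_one_le {d : ℕ} (hn : 0 < n) (hd : 0 < d)
    (hcol : ∀ j, #{i | M i j = true} = d) {ε : ℝ} (hε : 0 < ε)
    (hco : ∀ j₁ j₂, j₁ ≠ j₂ →
      (codeg (fun i j => M j i) j₁ j₂ : ℝ) ≤ (1 + ε) * ((d : ℝ) / n) ^ 2 * n)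
    (A : Finset (Fin n)) (hA : A.Nonempty) (hB : (n : ℝ) / (ε * d) ≤ #B) :
    |(ecount M A B : ℝ) / ((d : ℝ) / n * #A * #B) - 1| ≤ Real.sqrt (2 * ε * n / #A) := by
  set p : ℝ := d / n
  set a : ℝ := (#A : ℝ)
  set b : ℝ := (#B : ℝ)
  have ha : 0 < a := Nat.cast_pos.mpr hA.card_pos
  have hb : 0 < b := (by positivity : (0 : ℝ) < n / (ε * d)).trans_le hB
  have hpn : p * n = d := div_mul_cancel₀ _ (by positivity)
  have hdb : d ≤ ε * p ^ 2 * n * b := by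
    rw [div_le_iff₀ (by positivity)] at hB
    calc (d : ℝ) = p * n := hpn.symm
      _ ≤ p * (b * (ε * d)) := by gcongr
      _ = ε * p ^ 2 * n * b := by rw [← hpn]; ring
  have hvar : ∑ i, ((degIn M B i : ℝ) - p * b) ^ 2 ≤ 2 * ε * p ^ 2 * n * b ^ 2 := by
    have hK : 0 ≤ b * ((1 + ε) * p ^ 2 * n) := by positivity
    nlinarith [sum_sq_degIn_sub_le M B hcol hco, mul_le_mul_of_nonneg_right hdb hb.le]
  apply abs_div_sub_one_le_sqrt (by positivity)
  calc ((ecount M A B : ℝ) - p * a * b) ^ 2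
      ≤ a * ∑ i, ((degIn M B i : ℝ) - p * b) ^ 2 := by
        simpa only [mul_left_comm, mul_assoc] using sq_ecount_sub_le M B A (p * b)
    _ ≤ a * (2 * ε * p ^ 2 * n * b ^ 2) := by gcongr
    _ = 2 * ε * n / a * (p * a * b) ^ 2 := by field_simp

end DegreeInto

theorem stmt_18_general (n d : ℕ) (hn : 1 ≤ n) (hd1 : 1 ≤ d)
    (M : Fin n → Fin n → Bool) (hM : M ∈ regSet n d) (ε : ℝ) (hε : 0 < ε)
    (hco : ∀ i1 i2 : Fin n, i1 ≠ i2 →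
      max (codeg M i1 i2 : ℝ) (codeg (fun i j => M j i) i1 i2 : ℝ) ≤
        (1 + ε) * ((d : ℝ) / n) ^ 2 * n)
    (A B : Finset (Fin n))
    (hA : (n : ℝ) / (ε * d) ≤ (A.card : ℝ)) (hB : (n : ℝ) / (ε * d) ≤ (B.card : ℝ)) :
    |(ecount M A B : ℝ) / (((d : ℝ) / n) * A.card * B.card) - 1| ≤
      Real.sqrt (2 * ε * n / max (A.card : ℝ) (B.card : ℝ)) := by
  obtain ⟨-, hrow, hcol⟩ := mem_filter.mp hM
  have hthreshold : 0 < (n : ℝ) / (ε * d) := by positivity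
  rcases le_total (#B : ℝ) #A with h | h
  · rw [max_eq_left h]
    exact abs_ecount_div_sub_one_le M B hn hd1 hcol hε
      (fun j₁ j₂ hj => (le_max_right _ _).trans (hco j₁ j₂ hj))
      A (nonempty_of_pos_le_card hthreshold hA) hB
  · rw [max_eq_right h, ← ecount_transpose, mul_right_comm]
    exact abs_ecount_div_sub_one_le (fun i j => M j i) A hn hd1 hrow hε
      (fun i₁ i₂ hi => (le_max_left _ _).trans (hco i₁ i₂ hi))
      B (nonempty_of_pos_le_card hthreshold hB) hA

theorem stmt_18 (n d : ℕ) (hn : 1 ≤ n) (hd1 : 1 ≤ d) (hd2 : d ≤ n)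
    (M : Fin n → Fin n → Bool) (hM : M ∈ regSet n d) (ε : ℝ) (hε : 0 < ε)
    (hco : ∀ i1 i2 : Fin n, i1 ≠ i2 →
      max (codeg M i1 i2 : ℝ) (codeg (fun i j => M j i) i1 i2 : ℝ) ≤
        (1 + ε) * ((d : ℝ) / n) ^ 2 * n)
    (A B : Finset (Fin n))
    (hA : (n : ℝ) / (ε * d) ≤ (A.card : ℝ)) (hB : (n : ℝ) / (ε * d) ≤ (B.card : ℝ)) :
    |(ecount M A B : ℝ) / (((d : ℝ) / n) * A.card * B.card) - 1| ≤
      Real.sqrt (2 * ε * n / max (A.card : ℝ) (B.card : ℝ)) :=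
  stmt_18_general n d hn hd1 M hM ε hε hco A B hA hB
end
end
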